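/- arXiv:2604.27831 — 2 statements merged into one kernel-verified Lean document; each statement's English description precedes it below -/
import Mathlib

section
/- Let f ≥ 1, m ≥ 1, P ≥ 1 be integers and K = f·m, let A and Ṽ be symmetric positive definite P×P real matrices, let b_1 > 0 and b ≥ 0, and set N = I_f ⊗ (b_1 I_m + b 1_m 1_mᵀ), V_1 = b_1 Ṽ, V_2 = (mb + b_1) Ṽ, and T = I_f ⊗ I_m − (1/f)·1_f 1_fᵀ ⊗ (1/m)·1_m 1_mᵀ (the K×K centering matrix I_K − (1/K)1_K 1_Kᵀ under the identification of indices). Then the matrix T ⊗ A + N⁻¹ ⊗ Ṽ⁻¹ is invertible and {T ⊗ A + N⁻¹ ⊗ Ṽ⁻¹}⁻¹ = I_f ⊗ (I_m − (1/m)·1_m 1_mᵀ) ⊗ (A + V_1⁻¹)⁻¹ + (I_f − (1/f)·1_f 1_fᵀ) ⊗ (1/m)·1_m 1_mᵀ ⊗ (A + V_2⁻¹)⁻¹ + (1/f)·1_f 1_fᵀ ⊗ (1/m)·1_m 1_mᵀ ⊗ V_2. -/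
noncomputable section
open Matrix Kronecker

/-- The all-ones square matrix. -/
def onesMat (ι : Type*) : Matrix ι ι ℝ := Matrix.of fun _ _ => 1

lemma onesMat_mul_onesMat (ι : Type*) [Fintype ι] :
    onesMat ι * onesMat ι = (Fintype.card ι : ℝ) • onesMat ι := by
  ext i j
  simp [onesMat, Matrix.mul_apply, Finset.sum_const, Finset.card_univ]

lemma posDef_smul {n : Type*} [Fintype n] {M : Matrix n n ℝ} (hM : M.PosDef) {c : ℝ}
    (hc : 0 < c) : (c • M).PosDef := by
  refine Matrix.PosDef.of_dotProduct_mulVec_pos ?_ (fun x hx => ?_)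
  · unfold Matrix.IsHermitian
    rw [Matrix.conjTranspose_smul, hM.1]
    simp
  · have := hM.dotProduct_mulVec_pos hx
    simpa [Matrix.smul_mulVec, dotProduct_smul] using mul_pos hc this

lemma kron3_mul {f m P : ℕ} (X1 Y1 : Matrix (Fin f) (Fin f) ℝ)
    (X2 Y2 : Matrix (Fin m) (Fin m) ℝ) (X3 Y3 : Matrix (Fin P) (Fin P) ℝ) :
    (X1 ⊗ₖ X2 ⊗ₖ X3) * (Y1 ⊗ₖ Y2 ⊗ₖ Y3) = ((X1 * Y1) ⊗ₖ (X2 * Y2)) ⊗ₖ (X3 * Y3) := by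
  rw [Matrix.mul_kronecker_mul, Matrix.mul_kronecker_mul]

theorem stmt13 (f m P : ℕ) (hf : 1 ≤ f) (hm : 1 ≤ m) (hP : 1 ≤ P)
    (A V : Matrix (Fin P) (Fin P) ℝ) (hA : A.PosDef) (hV : V.PosDef)
    (b1 b : ℝ) (hb1 : 0 < b1) (hb : 0 ≤ b)
    (N : Matrix (Fin f × Fin m) (Fin f × Fin m) ℝ)
    (hN : N = (1 : Matrix (Fin f) (Fin f) ℝ)
        ⊗ₖ (b1 • (1 : Matrix (Fin m) (Fin m) ℝ) + b • onesMat (Fin m)))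
    (V1 : Matrix (Fin P) (Fin P) ℝ) (hV1 : V1 = b1 • V)
    (V2 : Matrix (Fin P) (Fin P) ℝ) (hV2 : V2 = (m * b + b1) • V)
    (T : Matrix (Fin f × Fin m) (Fin f × Fin m) ℝ)
    (hT : T = (1 : Matrix (Fin f) (Fin f) ℝ) ⊗ₖ (1 : Matrix (Fin m) (Fin m) ℝ)
        - ((f : ℝ)⁻¹ • onesMat (Fin f)) ⊗ₖ ((m : ℝ)⁻¹ • onesMat (Fin m))) :
    IsUnit (T ⊗ₖ A + N⁻¹ ⊗ₖ V⁻¹) ∧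
    (T ⊗ₖ A + N⁻¹ ⊗ₖ V⁻¹)⁻¹
      = ((1 : Matrix (Fin f) (Fin f) ℝ)
            ⊗ₖ ((1 : Matrix (Fin m) (Fin m) ℝ) - (m : ℝ)⁻¹ • onesMat (Fin m)))
          ⊗ₖ (A + V1⁻¹)⁻¹
        + (((1 : Matrix (Fin f) (Fin f) ℝ) - (f : ℝ)⁻¹ • onesMat (Fin f))
            ⊗ₖ ((m : ℝ)⁻¹ • onesMat (Fin m)))
          ⊗ₖ (A + V2⁻¹)⁻¹
        + (((f : ℝ)⁻¹ • onesMat (Fin f)) ⊗ₖ ((m : ℝ)⁻¹ • onesMat (Fin m)))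
          ⊗ₖ V2 := by
  subst hN hT hV1 hV2
  have hmR : (0:ℝ) < m := by exact_mod_cast hm
  have hfR : (0:ℝ) < f := by exact_mod_cast hf
  -- opaque abbreviations
  obtain ⟨c, hc'⟩ : ∃ x : ℝ, x = (m : ℝ) * b + b1 := ⟨_, rfl⟩
  have hc : 0 < c := by rw [hc']; positivity
  obtain ⟨Qm, hQm⟩ : ∃ X : Matrix (Fin m) (Fin m) ℝ, X = (m : ℝ)⁻¹ • onesMat (Fin m) :=
    ⟨_, rfl⟩
  obtain ⟨Qf, hQf⟩ : ∃ X : Matrix (Fin f) (Fin f) ℝ, X = (f : ℝ)⁻¹ • onesMat (Fin f) :=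
    ⟨_, rfl⟩
  obtain ⟨Pm, hPm⟩ : ∃ X : Matrix (Fin m) (Fin m) ℝ, X = 1 - Qm := ⟨_, rfl⟩
  obtain ⟨Pf, hPf⟩ : ∃ X : Matrix (Fin f) (Fin f) ℝ, X = 1 - Qf := ⟨_, rfl⟩
  rw [← hc', ← hQm, ← hQf, ← hPm, ← hPf]
  -- projection algebra
  have hQmQm : Qm * Qm = Qm := by
    rw [hQm, Matrix.smul_mul, Matrix.mul_smul, onesMat_mul_onesMat, smul_smul, smul_smul]
    congr 1
    simp
    field_simp
  have hQfQf : Qf * Qf = Qf := by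
    rw [hQf, Matrix.smul_mul, Matrix.mul_smul, onesMat_mul_onesMat, smul_smul, smul_smul]
    congr 1
    simp
    field_simp
  have hPmQm : Pm * Qm = 0 := by rw [hPm, sub_mul, one_mul, hQmQm, sub_self]
  have hQmPm : Qm * Pm = 0 := by rw [hPm, mul_sub, mul_one, hQmQm, sub_self]
  have hPmPm : Pm * Pm = Pm := by
    rw [hPm, mul_sub, mul_one, sub_mul, one_mul, hQmQm, sub_self, sub_zero]
  have hPfQf : Pf * Qf = 0 := by rw [hPf, sub_mul, one_mul, hQfQf, sub_self]
  have hQfPf : Qf * Pf = 0 := by rw [hPf, mul_sub, mul_one, hQfQf, sub_self]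
  have hPfPf : Pf * Pf = Pf := by
    rw [hPf, mul_sub, mul_one, sub_mul, one_mul, hQfQf, sub_self, sub_zero]
  have hPQm : Pm + Qm = 1 := by rw [hPm, sub_add_cancel]
  have hPQf : Pf + Qf = 1 := by rw [hPf, sub_add_cancel]
  -- V inverse facts
  have hVd : IsUnit V.det := Matrix.isUnit_iff_isUnit_det V |>.1 hV.isUnit
  have hVVinv : V * V⁻¹ = 1 := Matrix.mul_nonsing_inv V hVd
  have hVinvV : V⁻¹ * V = 1 := Matrix.nonsing_inv_mul V hVd
  have hV1inv : (b1 • V)⁻¹ = b1⁻¹ • V⁻¹ := by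
    apply Matrix.inv_eq_right_inv
    rw [Matrix.smul_mul, Matrix.mul_smul, smul_smul, hVVinv, mul_inv_cancel₀ hb1.ne', one_smul]
  have hV2inv : (c • V)⁻¹ = c⁻¹ • V⁻¹ := by
    apply Matrix.inv_eq_right_inv
    rw [Matrix.smul_mul, Matrix.mul_smul, smul_smul, hVVinv, mul_inv_cancel₀ hc.ne', one_smul]
  rw [hV1inv, hV2inv]
  -- decompose the middle block of N
  have honesQm : onesMat (Fin m) = (m:ℝ) • Qm := by
    rw [hQm, smul_smul, mul_inv_cancel₀ hmR.ne', one_smul]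
  have hMdecomp : b1 • (1 : Matrix (Fin m) (Fin m) ℝ) + b • onesMat (Fin m)
      = b1 • Pm + c • Qm := by
    rw [honesQm, ← hPQm, smul_add, smul_smul, hc', add_smul, mul_comm b (m:ℝ)]
    abel
  have hMinv : (b1 • (1 : Matrix (Fin m) (Fin m) ℝ) + b • onesMat (Fin m))
      * (b1⁻¹ • Pm + c⁻¹ • Qm) = 1 := by
    rw [hMdecomp, add_mul, mul_add, mul_add,
      Matrix.smul_mul, Matrix.smul_mul, Matrix.smul_mul, Matrix.smul_mul,
      Matrix.mul_smul, Matrix.mul_smul, Matrix.mul_smul, Matrix.mul_smul,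
      hPmPm, hPmQm, hQmPm, hQmQm, smul_smul, smul_smul, smul_smul, smul_smul,
      mul_inv_cancel₀ hb1.ne', mul_inv_cancel₀ hc.ne', one_smul, one_smul,
      smul_zero, smul_zero, add_zero, zero_add, hPQm]
  have hNinv : ((1 : Matrix (Fin f) (Fin f) ℝ)
      ⊗ₖ (b1 • (1 : Matrix (Fin m) (Fin m) ℝ) + b • onesMat (Fin m)))⁻¹
      = (1 : Matrix (Fin f) (Fin f) ℝ) ⊗ₖ (b1⁻¹ • Pm + c⁻¹ • Qm) := by
    apply Matrix.inv_eq_right_inv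
    rw [← Matrix.mul_kronecker_mul, one_mul, hMinv, Matrix.one_kronecker_one]
  rw [hNinv]
  -- the inner blocks and their inverses
  have hW1pd : (A + b1⁻¹ • V⁻¹).PosDef := hA.add (posDef_smul hV.inv (by positivity))
  have hW2pd : (A + c⁻¹ • V⁻¹).PosDef := hA.add (posDef_smul hV.inv (by positivity))
  have hW1i : (A + b1⁻¹ • V⁻¹) * (A + b1⁻¹ • V⁻¹)⁻¹ = 1 :=
    Matrix.mul_nonsing_inv _ (Matrix.isUnit_iff_isUnit_det _ |>.1 hW1pd.isUnit)
  have hW2i : (A + c⁻¹ • V⁻¹) * (A + c⁻¹ • V⁻¹)⁻¹ = 1 :=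
    Matrix.mul_nonsing_inv _ (Matrix.isUnit_iff_isUnit_det _ |>.1 hW2pd.isUnit)
  have hW3i : (c⁻¹ • V⁻¹) * (c • V) = 1 := by
    rw [Matrix.smul_mul, Matrix.mul_smul, smul_smul, hVinvV,
      inv_mul_cancel₀ hc.ne', one_smul]
  -- decompose X
  have h12 : (1 : Matrix (Fin f) (Fin f) ℝ) ⊗ₖ Qm = Pf ⊗ₖ Qm + Qf ⊗ₖ Qm := by
    rw [← hPQf, Matrix.add_kronecker]
  have h11 : (1 : Matrix (Fin f) (Fin f) ℝ) ⊗ₖ (1 : Matrix (Fin m) (Fin m) ℝ)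
      - Qf ⊗ₖ Qm = (1 : Matrix (Fin f) (Fin f) ℝ) ⊗ₖ Pm + Pf ⊗ₖ Qm := by
    have h13 : (1 : Matrix (Fin f) (Fin f) ℝ) ⊗ₖ (1 : Matrix (Fin m) (Fin m) ℝ)
        = ((1 : Matrix (Fin f) (Fin f) ℝ) ⊗ₖ Pm + Pf ⊗ₖ Qm) + Qf ⊗ₖ Qm := by
      conv_lhs => rw [show (1 : Matrix (Fin m) (Fin m) ℝ) = Pm + Qm from hPQm.symm,
        Matrix.kronecker_add, h12]
      abel
    rw [h13, add_sub_cancel_right]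
  have hX : ((1 : Matrix (Fin f) (Fin f) ℝ) ⊗ₖ (1 : Matrix (Fin m) (Fin m) ℝ)
        - Qf ⊗ₖ Qm) ⊗ₖ A
      + ((1 : Matrix (Fin f) (Fin f) ℝ) ⊗ₖ (b1⁻¹ • Pm + c⁻¹ • Qm)) ⊗ₖ V⁻¹
      = ((1 : Matrix (Fin f) (Fin f) ℝ) ⊗ₖ Pm) ⊗ₖ (A + b1⁻¹ • V⁻¹)
        + (Pf ⊗ₖ Qm) ⊗ₖ (A + c⁻¹ • V⁻¹)
        + (Qf ⊗ₖ Qm) ⊗ₖ (c⁻¹ • V⁻¹) := by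
    rw [h11]
    simp only [Matrix.kronecker_add, Matrix.add_kronecker, h12,
      Matrix.kronecker_smul, Matrix.smul_kronecker, smul_add]
    abel
  rw [hX]
  -- the product is one
  have hXY : (((1 : Matrix (Fin f) (Fin f) ℝ) ⊗ₖ Pm) ⊗ₖ (A + b1⁻¹ • V⁻¹)
        + (Pf ⊗ₖ Qm) ⊗ₖ (A + c⁻¹ • V⁻¹)
        + (Qf ⊗ₖ Qm) ⊗ₖ (c⁻¹ • V⁻¹))
      * (((1 : Matrix (Fin f) (Fin f) ℝ) ⊗ₖ Pm) ⊗ₖ (A + b1⁻¹ • V⁻¹)⁻¹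
        + (Pf ⊗ₖ Qm) ⊗ₖ (A + c⁻¹ • V⁻¹)⁻¹
        + (Qf ⊗ₖ Qm) ⊗ₖ (c • V)) = 1 := by
    simp only [add_mul, mul_add, kron3_mul, hPmPm, hPmQm, hQmPm, hQmQm, hPfPf, hPfQf,
      hQfPf, hQfQf, one_mul, mul_one, hW1i, hW2i, hW3i, Matrix.kronecker_zero,
      Matrix.zero_kronecker, add_zero, zero_add]
    rw [← Matrix.add_kronecker, ← Matrix.add_kronecker, ← h11, sub_add_cancel,
      Matrix.one_kronecker_one, Matrix.one_kronecker_one]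
  exact ⟨(Matrix.isUnit_iff_isUnit_det _).2 (Matrix.isUnit_det_of_right_inverse hXY), Matrix.inv_eq_right_inv hXY⟩
end
end

section
/- Let f ≥ 1, m ≥ 1, P ≥ 1 be integers and K = f·m ≥ 2, n = K(K−1)/2, let M, R̃, Ṽ be symmetric positive definite P×P real matrices, let b_1 > 0 and b ≥ 0, and let L = diag(ℓ_1, …, ℓ_P) with ℓ_i ≥ 0. Set N = I_f ⊗ (b_1 I_m + b 1_m 1_mᵀ), V_1 = b_1 Ṽ, V_2 = (mb + b_1) Ṽ, S_1 = R̃ + V_1, S_2 = R̃ + V_2, T = I_K − (1/K)·1_K 1_Kᵀ, Σ = {T ⊗ (M⁻¹ + R̃)⁻¹ + (N ⊗ Ṽ)⁻¹}⁻¹, and let 𝒞 be the n×K pairwise-contrast matrix whose rows are e_kᵀ − e_{k'}ᵀ for 1 ≤ k < k' ≤ K. Then tr[(𝒞 ⊗ I_P) Σ (𝒞ᵀ ⊗ I_P) (I_n ⊗ L)] = K·[f(m−1)·tr{(M + S_1⁻¹)⁻¹ S_1⁻¹ V_1 L V_1 S_1⁻¹} + (f−1)·tr{(M + S_2⁻¹)⁻¹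 S_2⁻¹ V_2 L V_2 S_2⁻¹} + f(m−1)·tr((V_1 − V_1 S_1⁻¹ V_1) L) + (f−1)·tr((V_2 − V_2 S_2⁻¹ V_2) L)]. -/
noncomputable section
open Matrix Kronecker

/-- The pairwise-contrast matrix whose rows, indexed by the pairs `k < k'`,
are the vectors `e_kᵀ − e_{k'}ᵀ`. -/
def Cmat (K : ℕ) : Matrix {p : Fin K × Fin K // p.1 < p.2} (Fin K) ℝ :=
  Matrix.of fun q j => (if j = q.1.1 then (1 : ℝ) else 0) - (if j = q.1.2 then 1 else 0)

/-- Block-diagonal kinship matrix with `f` compound-symmetry blocks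
`b1·I_m + b·1_m 1_mᵀ` of size `m`, as a matrix over `Fin (f * m)` via the
canonical identification `Fin f × Fin m ≃ Fin (f * m)`. -/
def Nmat (f m : ℕ) (b1 b : ℝ) : Matrix (Fin (f * m)) (Fin (f * m)) ℝ :=
  (((1 : Matrix (Fin f) (Fin f) ℝ)
      ⊗ₖ (b1 • (1 : Matrix (Fin m) (Fin m) ℝ) + b • onesMat (Fin m))).submatrix
    finProdFinEquiv.symm finProdFinEquiv.symm)

open Finset in
lemma CtC (K : ℕ) : (Cmat K)ᵀ * Cmat K
    = (K : ℝ) • (1 : Matrix (Fin K) (Fin K) ℝ) - onesMat (Fin K) := by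
  ext j j'
  rw [Matrix.mul_apply]
  set g : Fin K × Fin K → ℝ := fun p =>
    ((if j = p.1 then (1:ℝ) else 0) - (if j = p.2 then 1 else 0)) *
    ((if j' = p.1 then (1:ℝ) else 0) - (if j' = p.2 then 1 else 0)) with hg
  have hsub : ∑ q : {p : Fin K × Fin K // p.1 < p.2}, (Cmat K)ᵀ j q * Cmat K q j'
      = ∑ p ∈ univ.filter (fun p : Fin K × Fin K => p.1 < p.2), g p := by
    have h := Finset.sum_subtype (p := fun p : Fin K × Fin K => p.1 < p.2) (F := by infer_instance)
      (univ.filter (fun p : Fin K × Fin K => p.1 < p.2)) (by simp) g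
    rw [h]; rfl
  rw [hsub]
  have hdiag : ∀ a : Fin K, g (a, a) = 0 := by intro a; simp [hg]
  have hswap : ∀ p : Fin K × Fin K, g (p.2, p.1) = g p := by
    intro p; simp only [hg]; ring
  have htotal : ∑ p : Fin K × Fin K, g p
      = 2 * (K : ℝ) * (if j = j' then 1 else 0) - 2 := by
    rw [Fintype.sum_prod_type]
    simp only [hg, sub_mul, mul_sub, Finset.sum_sub_distrib]
    simp [Finset.sum_ite_eq', ite_and, mul_ite, Finset.sum_ite_eq]
    split_ifs with h <;> simp [Finset.card_univ] <;> ring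
  -- now partition the full sum
  have hpart : (∑ p ∈ univ.filter (fun p : Fin K × Fin K => p.1 < p.2), g p)
      + ∑ p ∈ univ.filter (fun p : Fin K × Fin K => ¬ p.1 < p.2), g p
      = ∑ p : Fin K × Fin K, g p :=
    Finset.sum_filter_add_sum_filter_not _ _ _
  have hgt_eq : ∑ p ∈ univ.filter (fun p : Fin K × Fin K => ¬ p.1 < p.2), g p
      = ∑ p ∈ univ.filter (fun p : Fin K × Fin K => p.1 < p.2), g p := by
    have hsplit : (∑ p ∈ (univ.filter (fun p : Fin K × Fin K => ¬ p.1 < p.2)).filter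
          (fun p => p.2 < p.1), g p)
        + ∑ p ∈ (univ.filter (fun p : Fin K × Fin K => ¬ p.1 < p.2)).filter
          (fun p => ¬ p.2 < p.1), g p
        = ∑ p ∈ univ.filter (fun p : Fin K × Fin K => ¬ p.1 < p.2), g p :=
      Finset.sum_filter_add_sum_filter_not _ _ _
    have h1 : (univ.filter (fun p : Fin K × Fin K => ¬ p.1 < p.2)).filter
          (fun p => p.2 < p.1) = univ.filter (fun p : Fin K × Fin K => p.2 < p.1) := by
      ext p
      simp only [Finset.mem_filter, Finset.mem_univ, true_and]
      exact ⟨fun h => h.2, fun h => ⟨asymm h, h⟩⟩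
    have h2 : ∑ p ∈ (univ.filter (fun p : Fin K × Fin K => ¬ p.1 < p.2)).filter
          (fun p => ¬ p.2 < p.1), g p = 0 := by
      refine Finset.sum_eq_zero fun p hp => ?_
      simp only [Finset.mem_filter] at hp
      have heq : p.1 = p.2 := le_antisymm (not_lt.1 hp.2) (not_lt.1 hp.1.2)
      have hz := hdiag p.1
      rwa [show (p.1, p.1) = p from Prod.ext rfl heq] at hz
    have h3 : ∑ p ∈ univ.filter (fun p : Fin K × Fin K => p.2 < p.1), g p
        = ∑ p ∈ univ.filter (fun p : Fin K × Fin K => p.1 < p.2), g p := by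
      refine Finset.sum_equiv (Equiv.prodComm (Fin K) (Fin K)) ?_ ?_
      · intro p
        simp only [Finset.mem_filter, Finset.mem_univ, true_and, Equiv.prodComm_apply,
          Prod.fst_swap, Prod.snd_swap]
      · intro p _
        exact (hswap p).symm
    rw [← hsplit, h1, h2, h3, add_zero]
  have hlt : ∑ p ∈ univ.filter (fun p : Fin K × Fin K => p.1 < p.2), g p
      = (K : ℝ) * (if j = j' then 1 else 0) - 1 := by
    have := hpart
    rw [hgt_eq, htotal] at this
    linarith
  rw [hlt]
  by_cases h : j = j' <;>
    simp [h, onesMat, Matrix.one_apply, Matrix.smul_apply]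

lemma onesMat_mul (n : ℕ) : onesMat (Fin n) * onesMat (Fin n) = (n : ℝ) • onesMat (Fin n) := by
  ext i j; simp [onesMat, Matrix.mul_apply]

lemma trace_onesMat (n : ℕ) : Matrix.trace (onesMat (Fin n)) = (n : ℝ) := by
  simp [onesMat, Matrix.trace, Matrix.diag]

lemma trace_submatrix_equiv' {n m : Type*} [Fintype n] [Fintype m]
    (e : n ≃ m) (A : Matrix m m ℝ) : Matrix.trace (A.submatrix e e) = Matrix.trace A := by
  simpa [Matrix.trace, Matrix.diag] using Equiv.sum_comp e (fun j => A j j)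

lemma posDef_smul' {P : ℕ} {A : Matrix (Fin P) (Fin P) ℝ} (hA : A.PosDef) {c : ℝ}
    (hc : 0 < c) : (c • A).PosDef := by
  constructor
  · show (c • A)ᴴ = c • A
    rw [Matrix.conjTranspose_smul, hA.1, star_trivial]
  · intro x hx
    simpa [Finsupp.mul_sum, Matrix.smul_apply, mul_assoc, mul_left_comm] using
      smul_pos hc (hA.2 hx)

lemma isUnitDet {P : ℕ} {A : Matrix (Fin P) (Fin P) ℝ} (hA : A.PosDef) : IsUnit A.det :=
  hA.det_pos.ne'.isUnit

lemma smul_matrix_inv {P : ℕ} (c : ℝ) (hc : c ≠ 0) (A : Matrix (Fin P) (Fin P) ℝ)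
    (hA : IsUnit A.det) : (c • A)⁻¹ = c⁻¹ • A⁻¹ := by
  apply Matrix.inv_eq_right_inv
  rw [Matrix.smul_mul, Matrix.mul_smul, smul_smul, Matrix.mul_nonsing_inv _ hA,
    mul_inv_cancel₀ hc, one_smul]

lemma kron_submatrix {f m P : ℕ} (X : Matrix (Fin f × Fin m) (Fin f × Fin m) ℝ)
    (Y : Matrix (Fin P) (Fin P) ℝ) :
    (X.submatrix finProdFinEquiv.symm finProdFinEquiv.symm) ⊗ₖ Y
      = (X ⊗ₖ Y).submatrix
          ((finProdFinEquiv.prodCongr (Equiv.refl (Fin P))).symm)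
          ((finProdFinEquiv.prodCongr (Equiv.refl (Fin P))).symm) := by
  ext ⟨i, p⟩ ⟨j, q⟩
  rfl

lemma kron3_mul_eq_one {κ n : Type*} [Fintype κ] [DecidableEq κ] [Fintype n] [DecidableEq n]
    (U0 U1 U2 : Matrix κ κ ℝ) (A0 A1 A2 B0 B1 B2 : Matrix n n ℝ)
    (h00 : U0 * U0 = U0) (h11 : U1 * U1 = U1) (h22 : U2 * U2 = U2)
    (h01 : U0 * U1 = 0) (h10 : U1 * U0 = 0) (h02 : U0 * U2 = 0) (h20 : U2 * U0 = 0)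
    (h12 : U1 * U2 = 0) (h21 : U2 * U1 = 0) (hsum : U0 + U1 + U2 = 1)
    (hA0 : A0 * B0 = 1) (hA1 : A1 * B1 = 1) (hA2 : A2 * B2 = 1) :
    (U0 ⊗ₖ A0 + U1 ⊗ₖ A1 + U2 ⊗ₖ A2) * (U0 ⊗ₖ B0 + U1 ⊗ₖ B1 + U2 ⊗ₖ B2) = 1 := by
  simp only [Matrix.add_mul, Matrix.mul_add, ← Matrix.mul_kronecker_mul, h00, h11, h22,
    h01, h10, h02, h20, h12, h21, hA0, hA1, hA2, Matrix.zero_kronecker, add_zero, zero_add]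
  rw [← Matrix.add_kronecker, ← Matrix.add_kronecker, hsum, Matrix.one_kronecker_one]

-- Woodbury 1 : (B⁻¹ + V⁻¹)⁻¹ = V - V (B+V)⁻¹ V
lemma wood1 {P : ℕ} (B V : Matrix (Fin P) (Fin P) ℝ)
    (hB : IsUnit B.det) (hV : IsUnit V.det) (hBV : IsUnit (B + V).det) :
    (B⁻¹ + V⁻¹)⁻¹ = V - V * (B + V)⁻¹ * V := by
  apply Matrix.inv_eq_right_inv
  have h1 : B⁻¹ * V = B⁻¹ * (B + V) - 1 := by
    rw [Matrix.mul_add, Matrix.nonsing_inv_mul _ hB]; abel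
  have key : B⁻¹ * (V * (B + V)⁻¹ * V) = B⁻¹ * V - (B + V)⁻¹ * V := by
    have ha : B⁻¹ * (V * (B + V)⁻¹ * V) = (B⁻¹ * V) * ((B + V)⁻¹ * V) := by
      simp only [Matrix.mul_assoc]
    rw [ha, h1, Matrix.sub_mul, Matrix.one_mul, ← Matrix.mul_assoc,
      Matrix.mul_nonsing_inv_cancel_right _ _ hBV, h1]
  have e1 : V⁻¹ * (V * (B + V)⁻¹ * V) = (B + V)⁻¹ * V := by
    rw [← Matrix.mul_assoc, ← Matrix.mul_assoc, Matrix.nonsing_inv_mul _ hV, Matrix.one_mul]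
  rw [Matrix.add_mul, Matrix.mul_sub, Matrix.mul_sub, Matrix.nonsing_inv_mul _ hV, e1, key]
  abel

-- Woodbury 2 : (M⁻¹ + S)⁻¹ = S⁻¹ - S⁻¹ (M + S⁻¹)⁻¹ S⁻¹
lemma wood2 {P : ℕ} (M S : Matrix (Fin P) (Fin P) ℝ)
    (hM : IsUnit M.det) (hS : IsUnit S.det) (hF : IsUnit (M + S⁻¹).det) :
    (M⁻¹ + S)⁻¹ = S⁻¹ - S⁻¹ * (M + S⁻¹)⁻¹ * S⁻¹ := by
  have h := wood1 M S⁻¹ hM (Matrix.isUnit_nonsing_inv_det _ hS) hF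
  rwa [Matrix.nonsing_inv_nonsing_inv _ hS] at h

theorem stmt15 (f m P : ℕ) (hf : 1 ≤ f) (hm : 1 ≤ m) (hP : 1 ≤ P)
    (hK : 2 ≤ f * m)
    (M R V : Matrix (Fin P) (Fin P) ℝ)
    (hM : M.PosDef) (hR : R.PosDef) (hV : V.PosDef)
    (b1 b : ℝ) (hb1 : 0 < b1) (hb : 0 ≤ b)
    (ℓ : Fin P → ℝ) (hℓ : ∀ i, 0 ≤ ℓ i)
    (L : Matrix (Fin P) (Fin P) ℝ) (hL : L = Matrix.diagonal ℓ)
    (V1 : Matrix (Fin P) (Fin P) ℝ) (hV1 : V1 = b1 • V)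
    (V2 : Matrix (Fin P) (Fin P) ℝ) (hV2 : V2 = (m * b + b1) • V)
    (S1 : Matrix (Fin P) (Fin P) ℝ) (hS1 : S1 = R + V1)
    (S2 : Matrix (Fin P) (Fin P) ℝ) (hS2 : S2 = R + V2)
    (T : Matrix (Fin (f * m)) (Fin (f * m)) ℝ)
    (hT : T = 1 - ((f * m : ℕ) : ℝ)⁻¹ • onesMat (Fin (f * m)))
    (Sig : Matrix (Fin (f * m) × Fin P) (Fin (f * m) × Fin P) ℝ)
    (hSig : Sig = (T ⊗ₖ (M⁻¹ + R)⁻¹ + (Nmat f m b1 b ⊗ₖ V)⁻¹)⁻¹) :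
    trace ((Cmat (f * m) ⊗ₖ (1 : Matrix (Fin P) (Fin P) ℝ)) * Sig
        * ((Cmat (f * m))ᵀ ⊗ₖ (1 : Matrix (Fin P) (Fin P) ℝ))
        * ((1 : Matrix {p : Fin (f * m) × Fin (f * m) // p.1 < p.2}
              {p : Fin (f * m) × Fin (f * m) // p.1 < p.2} ℝ) ⊗ₖ L))
      = ((f * m : ℕ) : ℝ)
        * ((f : ℝ) * ((m : ℝ) - 1)
              * trace ((M + S1⁻¹)⁻¹ * (S1⁻¹ * V1 * L * V1 * S1⁻¹))
            + ((f : ℝ) - 1)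
              * trace ((M + S2⁻¹)⁻¹ * (S2⁻¹ * V2 * L * V2 * S2⁻¹))
            + (f : ℝ) * ((m : ℝ) - 1) * trace ((V1 - V1 * S1⁻¹ * V1) * L)
            + ((f : ℝ) - 1) * trace ((V2 - V2 * S2⁻¹ * V2) * L)) := by
  have hf0 : (f : ℝ) ≠ 0 := Nat.cast_ne_zero.2 (by omega)
  have hm0 : (m : ℝ) ≠ 0 := Nat.cast_ne_zero.2 (by omega)
  have hKfm : ((f * m : ℕ) : ℝ) = (f : ℝ) * (m : ℝ) := by push_cast; ring
  set c2 : ℝ := (m : ℝ) * b + b1 with hc2def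
  have hc2 : 0 < c2 := by positivity
  -- kronecker-factor index type
  set Jf := onesMat (Fin f) with hJfdef
  set Jm := onesMat (Fin m) with hJmdef
  set Qp : Matrix (Fin f × Fin m) (Fin f × Fin m) ℝ :=
    (1 : Matrix (Fin f) (Fin f) ℝ) ⊗ₖ ((m : ℝ)⁻¹ • Jm) with hQpdef
  set U0 : Matrix (Fin f × Fin m) (Fin f × Fin m) ℝ :=
    ((f : ℝ)⁻¹ • Jf) ⊗ₖ ((m : ℝ)⁻¹ • Jm) with hU0def
  set U1 := Qp - U0 with hU1def
  set U2 := (1 : Matrix (Fin f × Fin m) (Fin f × Fin m) ℝ) - Qp with hU2def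
  have smallJm : ((m : ℝ)⁻¹ • Jm) * ((m : ℝ)⁻¹ • Jm) = (m : ℝ)⁻¹ • Jm := by
    rw [Matrix.smul_mul, Matrix.mul_smul, hJmdef, onesMat_mul, smul_smul, smul_smul]
    congr 1; field_simp
  have smallJf : (((f : ℝ)⁻¹ • Jf)) * (((f : ℝ)⁻¹ • Jf)) = (f : ℝ)⁻¹ • Jf := by
    rw [Matrix.smul_mul, Matrix.mul_smul, hJfdef, onesMat_mul, smul_smul, smul_smul]
    congr 1; field_simp
  have hQQ : Qp * Qp = Qp := by
    rw [hQpdef, ← Matrix.mul_kronecker_mul, Matrix.one_mul, smallJm]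
  have hQ0 : Qp * U0 = U0 := by
    rw [hQpdef, hU0def, ← Matrix.mul_kronecker_mul, Matrix.one_mul, smallJm]
  have h0Q : U0 * Qp = U0 := by
    rw [hQpdef, hU0def, ← Matrix.mul_kronecker_mul, Matrix.mul_one, smallJm]
  have h00 : U0 * U0 = U0 := by
    rw [hU0def, ← Matrix.mul_kronecker_mul, smallJf, smallJm]
  have h11 : U1 * U1 = U1 := by
    rw [hU1def]
    simp only [Matrix.sub_mul, Matrix.mul_sub, hQQ, hQ0, h0Q, h00]
    abel
  have h22 : U2 * U2 = U2 := by
    rw [hU2def]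
    simp only [Matrix.sub_mul, Matrix.mul_sub, hQQ, Matrix.one_mul, Matrix.mul_one]
    abel
  have h01 : U0 * U1 = 0 := by
    rw [hU1def]; simp only [Matrix.mul_sub, h0Q, h00]; abel
  have h10 : U1 * U0 = 0 := by
    rw [hU1def]; simp only [Matrix.sub_mul, hQ0, h00]; abel
  have h02 : U0 * U2 = 0 := by
    rw [hU2def]; simp only [Matrix.mul_sub, h0Q, Matrix.mul_one]; abel
  have h20 : U2 * U0 = 0 := by
    rw [hU2def]; simp only [Matrix.sub_mul, hQ0, Matrix.one_mul]; abel
  have h12 : U1 * U2 = 0 := by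
    rw [hU1def, hU2def]
    simp only [Matrix.sub_mul, Matrix.mul_sub, hQQ, h0Q, Matrix.mul_one]; abel
  have h21 : U2 * U1 = 0 := by
    rw [hU1def, hU2def]
    simp only [Matrix.sub_mul, Matrix.mul_sub, hQQ, hQ0, Matrix.one_mul]; abel
  have hsum : U0 + U1 + U2 = 1 := by rw [hU1def, hU2def]; abel
  -- P-level matrices
  set A := (M⁻¹ + R)⁻¹ with hAdef
  have hMRpd : (M⁻¹ + R).PosDef := hM.inv.add hR
  have hApd : A.PosDef := hMRpd.inv
  have hV1pd : V1.PosDef := by rw [hV1]; exact posDef_smul' hV hb1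
  have hV2pd : V2.PosDef := by rw [hV2]; exact posDef_smul' hV hc2
  set W1 := (A + V1⁻¹)⁻¹ with hW1def
  set W2 := (A + V2⁻¹)⁻¹ with hW2def
  have hAV1pd : (A + V1⁻¹).PosDef := hApd.add hV1pd.inv
  have hAV2pd : (A + V2⁻¹).PosDef := hApd.add hV2pd.inv
  have hV1inv : V1⁻¹ = b1⁻¹ • V⁻¹ := by
    rw [hV1]; exact smul_matrix_inv b1 hb1.ne' V (isUnitDet hV)
  have hV2inv : V2⁻¹ = c2⁻¹ • V⁻¹ := by
    rw [hV2]; exact smul_matrix_inv c2 hc2.ne' V (isUnitDet hV)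
  -- product-level operator pieces
  set Tp : Matrix (Fin f × Fin m) (Fin f × Fin m) ℝ := 1 - U0 with hTpdef
  set Np : Matrix (Fin f × Fin m) (Fin f × Fin m) ℝ :=
    (1 : Matrix (Fin f) (Fin f) ℝ) ⊗ₖ (b1 • 1 + b • Jm) with hNpdef
  set Ninvp := b1⁻¹ • U2 + c2⁻¹ • U1 + c2⁻¹ • U0 with hNinvpdef
  have hQm : (1 : Matrix (Fin f) (Fin f) ℝ) ⊗ₖ Jm = (m : ℝ) • Qp := by
    rw [hQpdef, Matrix.kronecker_smul, smul_smul, mul_inv_cancel₀ hm0, one_smul]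
  have hNp2 : Np = b1 • (1 : Matrix (Fin f × Fin m) (Fin f × Fin m) ℝ)
      + ((m : ℝ) * b) • Qp := by
    rw [hNpdef, Matrix.kronecker_add, Matrix.kronecker_smul, Matrix.kronecker_smul,
      Matrix.one_kronecker_one, hQm, smul_smul, mul_comm b (m:ℝ)]
  have hNp3 : Np = b1 • U2 + c2 • U1 + c2 • U0 := by
    rw [hNp2, hU1def, hU2def, hc2def]
    module
  have hNNinv : Np * Ninvp = 1 := by
    rw [hNp3, hNinvpdef]
    simp only [Matrix.add_mul, Matrix.mul_add, Matrix.smul_mul, Matrix.mul_smul,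
      h00, h11, h22, h01, h10, h02, h20, h12, h21, smul_smul, smul_zero,
      add_zero, zero_add, mul_inv_cancel₀ hb1.ne', mul_inv_cancel₀ hc2.ne',
      inv_mul_cancel₀ hb1.ne', inv_mul_cancel₀ hc2.ne', one_smul]
    rw [← hsum]; abel
  -- explicit inverse at product level
  set Op : Matrix ((Fin f × Fin m) × Fin P) ((Fin f × Fin m) × Fin P) ℝ :=
    Tp ⊗ₖ A + Ninvp ⊗ₖ V⁻¹ with hOpdef
  set Sp : Matrix ((Fin f × Fin m) × Fin P) ((Fin f × Fin m) × Fin P) ℝ :=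
    U0 ⊗ₖ (c2 • V) + U1 ⊗ₖ W2 + U2 ⊗ₖ W1 with hSpdef
  have hOp2 : Op = U0 ⊗ₖ (c2⁻¹ • V⁻¹) + U1 ⊗ₖ (A + c2⁻¹ • V⁻¹)
      + U2 ⊗ₖ (A + b1⁻¹ • V⁻¹) := by
    have hTU : Tp = U1 + U2 := by rw [hTpdef, hU1def, hU2def]; abel
    rw [hOpdef, hTU, hNinvpdef]
    simp only [Matrix.add_kronecker, Matrix.kronecker_add, Matrix.smul_kronecker,
      Matrix.kronecker_smul]
    module
  have hOS : Op * Sp = 1 := by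
    rw [hOp2, hSpdef]
    refine kron3_mul_eq_one U0 U1 U2 _ _ _ _ _ _ h00 h11 h22 h01 h10 h02 h20 h12 h21 hsum
      ?_ ?_ ?_
    · rw [Matrix.smul_mul, Matrix.mul_smul, smul_smul, Matrix.nonsing_inv_mul _ (isUnitDet hV),
        inv_mul_cancel₀ hc2.ne', one_smul]
    · rw [← hV2inv, hW2def]; exact Matrix.mul_nonsing_inv _ (isUnitDet hAV2pd)
    · rw [← hV1inv, hW1def]; exact Matrix.mul_nonsing_inv _ (isUnitDet hAV1pd)
  -- transport to Fin (f*m)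
  set e : Fin f × Fin m ≃ Fin (f * m) := finProdFinEquiv with hedef
  set E : (Fin f × Fin m) × Fin P ≃ Fin (f * m) × Fin P :=
    e.prodCongr (Equiv.refl (Fin P)) with hEdef
  have hJ : onesMat (Fin (f * m)) = (Jf ⊗ₖ Jm).submatrix e.symm e.symm := by
    ext i j
    simp [onesMat, hJfdef, hJmdef, Matrix.submatrix_apply, Matrix.kroneckerMap_apply]
  have hU0J : U0 = ((f * m : ℕ) : ℝ)⁻¹ • (Jf ⊗ₖ Jm) := by
    rw [hU0def, Matrix.smul_kronecker, Matrix.kronecker_smul, smul_smul, hKfm,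
      mul_inv]
  have hT2 : T = Tp.submatrix e.symm e.symm := by
    rw [hT, hJ, hTpdef, hU0J]
    simp [Matrix.submatrix_sub, Matrix.submatrix_smul, Matrix.submatrix_one_equiv]
  have hN2 : Nmat f m b1 b = Np.submatrix e.symm e.symm := rfl
  have hNV : (Nmat f m b1 b ⊗ₖ V)⁻¹ = (Ninvp ⊗ₖ V⁻¹).submatrix E.symm E.symm := by
    apply Matrix.inv_eq_right_inv
    have hinner : (Np ⊗ₖ V) * (Ninvp ⊗ₖ V⁻¹) = 1 := by
      rw [← Matrix.mul_kronecker_mul, hNNinv, Matrix.mul_nonsing_inv _ (isUnitDet hV),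
        Matrix.one_kronecker_one]
    rw [hN2, hedef, kron_submatrix, ← hEdef, Matrix.submatrix_mul_equiv, hinner,
      Matrix.submatrix_one_equiv]
  have hOtr : T ⊗ₖ (M⁻¹ + R)⁻¹ + (Nmat f m b1 b ⊗ₖ V)⁻¹ = Op.submatrix E.symm E.symm := by
    rw [hT2, hedef, kron_submatrix, hNV, hOpdef, ← hAdef, Matrix.submatrix_add, hEdef, hedef]
    rfl
  have hSig2 : Sig = Sp.submatrix E.symm E.symm := by
    rw [hSig, hOtr]
    apply Matrix.inv_eq_right_inv
    rw [Matrix.submatrix_mul_equiv, hOS, Matrix.submatrix_one_equiv]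
  -- traces of the projections
  have hK0 : ((f * m : ℕ) : ℝ) ≠ 0 := by rw [hKfm]; exact mul_ne_zero hf0 hm0
  have htQp : Matrix.trace Qp = (f : ℝ) := by
    rw [hQpdef, Matrix.trace_kronecker, Matrix.trace_one, Matrix.trace_smul, hJmdef,
      trace_onesMat]
    simp [inv_mul_cancel₀ hm0]
  have htU0 : Matrix.trace U0 = 1 := by
    rw [hU0def, Matrix.trace_kronecker, Matrix.trace_smul, Matrix.trace_smul, hJmdef, hJfdef,
      trace_onesMat, trace_onesMat]
    simp [inv_mul_cancel₀ hm0, inv_mul_cancel₀ hf0]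
  have htU1 : Matrix.trace U1 = (f : ℝ) - 1 := by
    rw [hU1def, Matrix.trace_sub, htQp, htU0]
  have htU2 : Matrix.trace U2 = (f : ℝ) * (m : ℝ) - (f : ℝ) := by
    rw [hU2def, Matrix.trace_sub, htQp, Matrix.trace_one]
    simp [hKfm]
  -- reduce the LHS trace
  have step1 : trace ((Cmat (f * m) ⊗ₖ (1 : Matrix (Fin P) (Fin P) ℝ)) * Sig
        * ((Cmat (f * m))ᵀ ⊗ₖ (1 : Matrix (Fin P) (Fin P) ℝ))
        * ((1 : Matrix {p : Fin (f * m) × Fin (f * m) // p.1 < p.2}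
              {p : Fin (f * m) × Fin (f * m) // p.1 < p.2} ℝ) ⊗ₖ L))
      = trace (Sig * ((((Cmat (f * m))ᵀ ⊗ₖ (1 : Matrix (Fin P) (Fin P) ℝ))
          * (((1 : Matrix {p : Fin (f * m) × Fin (f * m) // p.1 < p.2}
              {p : Fin (f * m) × Fin (f * m) // p.1 < p.2} ℝ) ⊗ₖ L)
            * (Cmat (f * m) ⊗ₖ (1 : Matrix (Fin P) (Fin P) ℝ)))))) := by
    rw [Matrix.mul_assoc, Matrix.mul_assoc, Matrix.trace_mul_comm]
    simp only [Matrix.mul_assoc]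
  have hG : ((Cmat (f * m))ᵀ ⊗ₖ (1 : Matrix (Fin P) (Fin P) ℝ))
          * (((1 : Matrix {p : Fin (f * m) × Fin (f * m) // p.1 < p.2}
              {p : Fin (f * m) × Fin (f * m) // p.1 < p.2} ℝ) ⊗ₖ L)
            * (Cmat (f * m) ⊗ₖ (1 : Matrix (Fin P) (Fin P) ℝ)))
      = (((f * m : ℕ) : ℝ) • (1 : Matrix (Fin (f * m)) (Fin (f * m)) ℝ)
          - onesMat (Fin (f * m))) ⊗ₖ L := by
    rw [← Matrix.mul_kronecker_mul, Matrix.one_mul, Matrix.mul_one,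
      ← Matrix.mul_kronecker_mul, Matrix.one_mul, CtC]
  set Gp : Matrix (Fin f × Fin m) (Fin f × Fin m) ℝ :=
    ((f * m : ℕ) : ℝ) • 1 - Jf ⊗ₖ Jm with hGpdef
  have hGfm : ((f * m : ℕ) : ℝ) • (1 : Matrix (Fin (f * m)) (Fin (f * m)) ℝ)
      - onesMat (Fin (f * m)) = Gp.submatrix e.symm e.symm := by
    rw [hJ, hGpdef]
    simp [Matrix.submatrix_sub, Matrix.submatrix_smul, Matrix.submatrix_one_equiv]
  have hJK : Jf ⊗ₖ Jm = ((f * m : ℕ) : ℝ) • U0 := by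
    rw [hU0J, smul_smul, mul_inv_cancel₀ hK0, one_smul]
  have hGpU : Gp = ((f * m : ℕ) : ℝ) • U1 + ((f * m : ℕ) : ℝ) • U2 := by
    rw [hGpdef, hJK, ← hsum]
    module
  have hGpL : Gp ⊗ₖ L = U1 ⊗ₖ (((f * m : ℕ) : ℝ) • L)
      + U2 ⊗ₖ (((f * m : ℕ) : ℝ) • L) := by
    rw [hGpU]
    simp only [Matrix.add_kronecker, Matrix.smul_kronecker, ← Matrix.kronecker_smul]
  have hprod : Sp * (Gp ⊗ₖ L) = U1 ⊗ₖ (W2 * (((f * m : ℕ) : ℝ) • L))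
      + U2 ⊗ₖ (W1 * (((f * m : ℕ) : ℝ) • L)) := by
    rw [hSpdef, hGpL]
    simp only [Matrix.mul_add, Matrix.add_mul, ← Matrix.mul_kronecker_mul, h11, h22,
      h01, h12, h21, h02, Matrix.zero_kronecker, add_zero, zero_add]
  have step2 : trace (Sig * ((((f * m : ℕ) : ℝ)
        • (1 : Matrix (Fin (f * m)) (Fin (f * m)) ℝ) - onesMat (Fin (f * m))) ⊗ₖ L))
      = ((f : ℝ) - 1) * (((f * m : ℕ) : ℝ) * trace (W2 * L))
        + ((f : ℝ) * (m : ℝ) - (f : ℝ)) * (((f * m : ℕ) : ℝ) * trace (W1 * L)) := by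
    rw [hGfm, hedef, kron_submatrix, ← hedef, ← hEdef, hSig2, Matrix.submatrix_mul_equiv,
      trace_submatrix_equiv', hprod, Matrix.trace_add, Matrix.trace_kronecker,
      Matrix.trace_kronecker, htU1, htU2, Matrix.mul_smul, Matrix.mul_smul,
      Matrix.trace_smul, Matrix.trace_smul, smul_eq_mul, smul_eq_mul]
  -- Woodbury identities for W1 and W2
  have hWid : ∀ (Vj Sj : Matrix (Fin P) (Fin P) ℝ), Vj.PosDef → Sj = R + Vj →
      (A + Vj⁻¹)⁻¹ = Vj - Vj * Sj⁻¹ * Vj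
        + Vj * Sj⁻¹ * (M + Sj⁻¹)⁻¹ * Sj⁻¹ * Vj := by
    intro Vj Sj hVj hSj
    have hSjpd : Sj.PosDef := by rw [hSj]; exact hR.add hVj
    have hBVpd : (M⁻¹ + R + Vj).PosDef := hMRpd.add hVj
    have w1 := wood1 (M⁻¹ + R) Vj (isUnitDet hMRpd) (isUnitDet hVj) (isUnitDet hBVpd)
    have hMS : M⁻¹ + R + Vj = M⁻¹ + Sj := by rw [hSj, add_assoc]
    have hFpd : (M + Sj⁻¹).PosDef := hM.add hSjpd.inv
    have w2 := wood2 M Sj (isUnitDet hM) (isUnitDet hSjpd) (isUnitDet hFpd)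
    rw [hAdef, w1, hMS, w2]
    noncomm_ring
  have rot : ∀ (Vj Sj F : Matrix (Fin P) (Fin P) ℝ),
      trace (Vj * Sj⁻¹ * F * Sj⁻¹ * Vj * L) = trace (F * (Sj⁻¹ * Vj * L * Vj * Sj⁻¹)) := by
    intro Vj Sj F
    have h1 : Vj * Sj⁻¹ * F * Sj⁻¹ * Vj * L = (Vj * Sj⁻¹) * F * (Sj⁻¹ * Vj * L) := by
      simp only [Matrix.mul_assoc]
    rw [h1, Matrix.trace_mul_cycle, Matrix.trace_mul_cycle]
    simp only [Matrix.mul_assoc]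
  have t1 : trace (W1 * L) = trace ((M + S1⁻¹)⁻¹ * (S1⁻¹ * V1 * L * V1 * S1⁻¹))
      + trace ((V1 - V1 * S1⁻¹ * V1) * L) := by
    rw [hW1def, hWid V1 S1 hV1pd hS1, Matrix.add_mul, Matrix.trace_add, rot, add_comm]
  have t2 : trace (W2 * L) = trace ((M + S2⁻¹)⁻¹ * (S2⁻¹ * V2 * L * V2 * S2⁻¹))
      + trace ((V2 - V2 * S2⁻¹ * V2) * L) := by
    rw [hW2def, hWid V2 S2 hV2pd hS2, Matrix.add_mul, Matrix.trace_add, rot, add_comm]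
  rw [step1, hG, step2, t1, t2, hKfm]
  ring
end
end
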